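/- If {(X_i,Y_i)} are i.i.d., S is a permutation invariant stopping time w.r.t. {X_i}, and T(T) is a non-randomized permutation invariant stopping time w.r.t. {Y_i}, then g(y, T) = g(π(y), T) for every internal node y of T and every coordinate permutation π. -/

import Mathlib

open Finset
open scoped Classical

noncomputable section

variable {Ω : Type*} [Fintype Ω] {𝒳 : Type*} {𝒴 : Type*}

/-- Probability of an event under weights `p` on a finite sample space. -/
def prW (p : Ω → ℝ) (A : Ω → Prop) : ℝ := ∑ ω, if A ω then p ω else 0

/-- Expectation under weights `p`. -/
def exW (p : Ω → ℝ) (f : Ω → ℝ) : ℝ := ∑ ω, p ω * f ω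

/-- `p` is a probability weight function. -/
def IsProbW (p : Ω → ℝ) : Prop := (∀ ω, 0 ≤ p ω) ∧ ∑ ω, p ω = 1

/-- Conditional probability `P(A | B)`. -/
def cprW (p : Ω → ℝ) (A B : Ω → Prop) : ℝ := prW p (fun ω => A ω ∧ B ω) / prW p B

/-- Conditional expectation `E(f | B)`. -/
def cexW (p : Ω → ℝ) (f : Ω → ℝ) (B : Ω → Prop) : ℝ :=
  (∑ ω, if B ω then p ω * f ω else 0) / prW p B

/-- positive part of a real number -/
def posP (x : ℝ) : ℝ := max x 0

/-- `S` is a (non-randomized) stopping time w.r.t. the process `X` (time starts at 1):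
its value is determined by the observations up to itself. -/
def IsSTW (X : ℕ → Ω → 𝒳) (S : Ω → ℕ) : Prop :=
  ∀ ω ω', (∀ i, 1 ≤ i → i ≤ S ω → X i ω = X i ω') → S ω' = S ω

/-- The path of the process `Y` at sample `ω`. -/
def pathOf (Y : ℕ → Ω → 𝒴) (ω : Ω) : ℕ → 𝒴 := fun i => Y i ω

/-- The path `f` extends (passes through) the node `y` (a finite string). -/
def ExtN (y : List 𝒴) (f : ℕ → 𝒴) : Prop := ∀ i : Fin y.length, f (i.1 + 1) = y.get i

/-- A stopping function on paths: its value depends only on the path up to that value.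
This is the path-representation of a non-randomized stopping time (a tree). -/
def IsStopFun (t : (ℕ → 𝒴) → ℕ) : Prop :=
  ∀ f g, (∀ i, 1 ≤ i → i ≤ t f → f i = g i) → t g = t f

/-- `y` is an internal node of the tree `t`. -/
def InternalNode (t : (ℕ → 𝒴) → ℕ) (y : List 𝒴) : Prop :=
  ∀ f, ExtN y f → y.length < t f

/-- `u` is (the stopping function of) a subtree rooted at node `y`. -/
def IsSubtreeAt (y : List 𝒴) (u : (ℕ → 𝒴) → ℕ) : Prop :=
  IsStopFun u ∧ ∀ f, ExtN y f → y.length ≤ u f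

/-- false-alarm weight `a(y)` of node `y` -/
def aW (p : Ω → ℝ) (Y : ℕ → Ω → 𝒴) (S : Ω → ℕ) (y : List 𝒴) : ℝ :=
  prW p (fun ω => ExtN y (pathOf Y ω) ∧ y.length < S ω)

/-- delay weight `b(y)` of node `y` -/
def bW (p : Ω → ℝ) (Y : ℕ → Ω → 𝒴) (S : Ω → ℕ) (y : List 𝒴) : ℝ :=
  exW p (fun ω => if ExtN y (pathOf Y ω) then posP ((y.length : ℝ) - (S ω : ℝ)) else 0)

/-- false-alarm weight `a(T_y)` of a subtree `u` rooted at `y` (the sum of `a(γ)`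
over its leaves `γ`). -/
def aSubW (p : Ω → ℝ) (Y : ℕ → Ω → 𝒴) (S : Ω → ℕ) (y : List 𝒴) (u : (ℕ → 𝒴) → ℕ) : ℝ :=
  prW p (fun ω => ExtN y (pathOf Y ω) ∧ u (pathOf Y ω) < S ω)

/-- delay weight `b(T_y)` of a subtree `u` rooted at `y` (the sum of `b(γ)` over its leaves). -/
def bSubW (p : Ω → ℝ) (Y : ℕ → Ω → 𝒴) (S : Ω → ℕ) (y : List 𝒴) (u : (ℕ → 𝒴) → ℕ) : ℝ :=
  exW p (fun ω => if ExtN y (pathOf Y ω) then posP ((u (pathOf Y ω) : ℝ) - (S ω : ℝ)) else 0)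

/-- Lagrangian cost `J_λ(T_y)` of the subtree `u` rooted at `y`. -/
def JsubW (p : Ω → ℝ) (Y : ℕ → Ω → 𝒴) (S : Ω → ℕ) (lam : ℝ) (y : List 𝒴)
    (u : (ℕ → 𝒴) → ℕ) : ℝ :=
  bSubW p Y S y u + lam * aSubW p Y S y u

/-- Lagrangian cost `J_λ(y)` of the single node `y`. -/
def JnodeW (p : Ω → ℝ) (Y : ℕ → Ω → 𝒴) (S : Ω → ℕ) (lam : ℝ) (y : List 𝒴) : ℝ :=
  bW p Y S y + lam * aW p Y S y

/-- `u` is the smallest minimal-cost rooted subtree `T_y(λ)` of `t` at node `y`,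
for Lagrange multiplier `lam`. -/
def IsOptSubtreeAt (p : Ω → ℝ) (Y : ℕ → Ω → 𝒴) (S : Ω → ℕ) (lam : ℝ)
    (t : (ℕ → 𝒴) → ℕ) (y : List 𝒴) (u : (ℕ → 𝒴) → ℕ) : Prop :=
  IsSubtreeAt y u ∧ (∀ f, ExtN y f → u f ≤ t f) ∧
  (∀ v, IsSubtreeAt y v → (∀ f, ExtN y f → v f ≤ t f) →
    JsubW p Y S lam y u ≤ JsubW p Y S lam y v) ∧
  (∀ v, IsSubtreeAt y v → (∀ f, ExtN y f → v f ≤ t f) →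
    JsubW p Y S lam y v = JsubW p Y S lam y u → ∀ f, ExtN y f → u f ≤ v f)

/-- the tradeoff quantity `g(y, T) = (b(T_y) - b(y)) / (a(y) - a(T_y))`
(with the convention 0/0 = 0, which holds automatically for real division). -/
def gW (p : Ω → ℝ) (Y : ℕ → Ω → 𝒴) (S : Ω → ℕ) (t : (ℕ → 𝒴) → ℕ) (y : List 𝒴) : ℝ :=
  (bSubW p Y S y t - bW p Y S y) / (aW p Y S y - aSubW p Y S y t)

/-- node permuted by a coordinate permutation -/
def permNode (y : List 𝒴) (π : Equiv.Perm (Fin y.length)) : List 𝒴 :=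
  List.ofFn fun i => y.get (π i)

/-- permutation invariance of a stopping time w.r.t. process `Y`:
`P(T ≤ n | Y^n = y^n) = P(T ≤ n | Y^n = π(y^n))`. -/
def PermInvST (p : Ω → ℝ) (Y : ℕ → Ω → 𝒴) (T : Ω → ℕ) (κ : ℕ) : Prop :=
  ∀ y : List 𝒴, y.length ≤ κ → ∀ π : Equiv.Perm (Fin y.length),
    cprW p (fun ω => T ω ≤ y.length) (fun ω => ExtN y (pathOf Y ω)) =
    cprW p (fun ω => T ω ≤ y.length) (fun ω => ExtN (permNode y π) (pathOf Y ω))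

/-- the pairs `(X_i, Y_i)` are i.i.d. (over the first `κ` time steps). -/
def IIDPairs [Fintype 𝒳] [Fintype 𝒴] (p : Ω → ℝ) (X : ℕ → Ω → 𝒳) (Y : ℕ → Ω → 𝒴)
    (κ : ℕ) : Prop :=
  ∃ μ : 𝒳 × 𝒴 → ℝ, (∀ z, 0 ≤ μ z) ∧ (∑ z, μ z = 1) ∧
    ∀ (x : ℕ → 𝒳) (yf : ℕ → 𝒴),
      prW p (fun ω => ∀ i, 1 ≤ i → i ≤ κ → X i ω = x i ∧ Y i ω = yf i) =
        ∏ i ∈ Finset.Icc 1 κ, μ (x i, yf i)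

/-- a randomized stopping time bounded by `κ`, given by its conditional stopping
kernel `q n y^n = P(T = n | Y^n = y^n)`. -/
def IsRandST (q : ℕ → (ℕ → 𝒴) → ℝ) (κ : ℕ) : Prop :=
  (∀ n f, 0 ≤ q n f) ∧
  (∀ n f g, (∀ i, 1 ≤ i → i ≤ n → f i = g i) → q n g = q n f) ∧
  (∀ f, ∑ n ∈ Finset.Icc 1 κ, q n f = 1)

/-- false-alarm probability `P(T < S)` of a randomized stopping time -/
def faR (p : Ω → ℝ) (Y : ℕ → Ω → 𝒴) (S : Ω → ℕ) (κ : ℕ) (q : ℕ → (ℕ → 𝒴) → ℝ) : ℝ :=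
  exW p (fun ω => ∑ n ∈ Finset.Icc 1 κ, q n (pathOf Y ω) * (if n < S ω then 1 else 0))

/-- expected reaction delay `E(T - S)⁺` of a randomized stopping time -/
def delayR (p : Ω → ℝ) (Y : ℕ → Ω → 𝒴) (S : Ω → ℕ) (κ : ℕ) (q : ℕ → (ℕ → 𝒴) → ℝ) : ℝ :=
  exW p (fun ω => ∑ n ∈ Finset.Icc 1 κ, q n (pathOf Y ω) * posP ((n : ℝ) - (S ω : ℝ)))

/-- the optimal tradeoff curve `d(α)` -/
def dW (p : Ω → ℝ) (Y : ℕ → Ω → 𝒴) (S : Ω → ℕ) (κ : ℕ) (α : ℝ) : ℝ :=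
  sInf {v | ∃ q, IsRandST q κ ∧ faR p Y S κ q ≤ α ∧ v = delayR p Y S κ q}

/-- the stopping kernel of a non-randomized stopping function -/
def detKer (t : (ℕ → 𝒴) → ℕ) : ℕ → (ℕ → 𝒴) → ℝ := fun n f => if t f = n then 1 else 0

/-- prefix of length `n` of a path (the node of depth `n` it visits) -/
def prefixOf (f : ℕ → 𝒴) (n : ℕ) : List 𝒴 := (List.range n).map fun i => f (i + 1)

/-- the one-step-lookahead node cost `c(y^n)` -/
def cnodeW (p : Ω → ℝ) (Y : ℕ → Ω → 𝒴) (S : Ω → ℕ) (lam : ℝ) (y : List 𝒴) : ℝ :=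
  cexW p (fun ω => posP ((y.length : ℝ) - (S ω : ℝ))) (fun ω => ExtN y (pathOf Y ω)) +
    lam * cprW p (fun ω => y.length < S ω) (fun ω => ExtN y (pathOf Y ω))

end

/-!
Write `W = ((X_i, Y_i))_{i ≤ κ}`. Both `b(T_y) - b(y)` and `a(y) - a(T_y)` are expectations of
`1{Y^{|y|} = y} · φ(|y|, T, S)` for suitable `φ`, and such an integrand is a function of `W`
because `S, T ≤ κ` are stopping times. The pairs being i.i.d., the law of `W` is invariant under
permuting coordinates, so `W` may be replaced by `W ∘ π` (with `π` extended by the identity beyond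
`|y|`), which turns the node `π(y)` into `y`. For a non-randomized stopping time,
`P(T ≤ m | Y^m)` is `0` or `1`, so permutation invariance says that the event `T ≤ m` does not
change when the first `|y| ≤ m` observations are permuted. Hence `T` is unchanged where `T > |y|`,
as below an internal node, and `S` is either unchanged or stays `≤ |y|`, where `φ` does not
depend on it.
-/

section WeightedSums

variable {Ω : Type*} [Fintype Ω] {p : Ω → ℝ}

theorem prW_congr {A B : Ω → Prop} (h : ∀ ω, A ω ↔ B ω) : prW p A = prW p B :=
  Finset.sum_congr rfl fun ω _ => by rw [h ω]

theorem exists_of_prW_ne_zero {A : Ω → Prop} (h : prW p A ≠ 0) : ∃ ω, A ω ∧ p ω ≠ 0 := by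
  obtain ⟨ω, -, hω⟩ := Finset.exists_ne_zero_of_sum_ne_zero h
  by_cases hA : A ω
  · exact ⟨ω, hA, by simpa [hA] using hω⟩
  · simp [hA] at hω

theorem prW_ne_zero_of_mem (hp : ∀ ω, 0 ≤ p ω) {A : Ω → Prop} {ω : Ω} (hA : A ω)
    (hω : p ω ≠ 0) : prW p A ≠ 0 := by
  refine (lt_of_lt_of_le (lt_of_le_of_ne (hp ω) (Ne.symm hω)) ?_).ne'
  unfold prW
  simpa [hA] using Finset.single_le_sum (f := fun ω => if A ω then p ω else 0)
    (fun ω _ => by split_ifs <;> simp [hp ω]) (Finset.mem_univ ω)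

theorem exW_comp_eq_sum {β : Type*} [Fintype β] (W : Ω → β) (f : β → ℝ) :
    exW p (f ∘ W) = ∑ u, prW p (fun ω => W ω = u) * f u := by
  unfold exW prW
  rw [← Finset.sum_fiberwise Finset.univ W]
  refine Finset.sum_congr rfl fun u _ => ?_
  rw [Finset.sum_filter, Finset.sum_mul]
  refine Finset.sum_congr rfl fun ω _ => ?_
  split_ifs with h <;> simp [h]

theorem exW_eq_of_exchangeable {β : Type*} [Fintype β] (W : Ω → β) (σ : Equiv.Perm β)
    (hσ : ∀ u, prW p (fun ω => W ω = σ u) = prW p (fun ω => W ω = u))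
    {F G : Ω → ℝ} (hF : F.FactorsThrough W) (hG : G.FactorsThrough W)
    (hFG : ∀ ω ω', p ω ≠ 0 → p ω' ≠ 0 → W ω' = σ (W ω) → G ω' = F ω) :
    exW p G = exW p F := by
  rw [← hF.extend_comp (0 : β → ℝ), ← hG.extend_comp (0 : β → ℝ), exW_comp_eq_sum, exW_comp_eq_sum,
    ← Equiv.sum_comp σ]
  refine Finset.sum_congr rfl fun u _ => ?_
  rw [hσ]
  by_cases hu : prW p (fun ω => W ω = u) = 0
  · simp [hu]
  obtain ⟨ω, rfl, hω⟩ := exists_of_prW_ne_zero hu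
  obtain ⟨ω', hω'W, hω'⟩ := exists_of_prW_ne_zero (A := fun ω' => W ω' = σ (W ω)) (by rwa [hσ])
  rw [← hω'W, hF.extend_apply, hG.extend_apply, hFG ω ω' hω hω' hω'W]

end WeightedSums

section Paths

variable {𝒴 : Type*}

theorem extN_getD (y : List 𝒴) (d : 𝒴) : ExtN y (fun i => y.getD (i - 1) d) := by
  intro i
  simp

theorem InternalNode.length_le {t : (ℕ → 𝒴) → ℕ} {y : List 𝒴} (hy : InternalNode t y) {κ : ℕ}
    (htb : ∀ f, t f ≤ κ) : y.length ≤ κ := by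
  cases y with
  | nil => exact Nat.zero_le κ
  | cons a l => exact ((hy _ (extN_getD _ a)).trans_le (htb _)).le

theorem length_prefixOf (f : ℕ → 𝒴) (n : ℕ) : (prefixOf f n).length = n := by
  simp [prefixOf]

theorem get_prefixOf (f : ℕ → 𝒴) (n : ℕ) (j : Fin (prefixOf f n).length) :
    (prefixOf f n).get j = f (j + 1) := by
  rw [List.get_eq_getElem]
  simp [prefixOf]

theorem extN_prefixOf_iff {f g : ℕ → 𝒴} {n : ℕ} :
    ExtN (prefixOf f n) g ↔ ∀ i < n, g (i + 1) = f (i + 1) := by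
  simp [ExtN, prefixOf, Fin.forall_iff]

theorem length_permNode (y : List 𝒴) (π : Equiv.Perm (Fin y.length)) :
    (permNode y π).length = y.length := by
  simp [permNode]

theorem extN_permNode_iff {y : List 𝒴} {π : Equiv.Perm (Fin y.length)} {g : ℕ → 𝒴} :
    ExtN (permNode y π) g ↔ ∀ i : Fin y.length, g (i + 1) = y.get (π i) := by
  simp only [ExtN, permNode, List.get_ofFn, Fin.forall_iff, List.length_ofFn]
  rfl

end Paths

section Permutations

def permIdx {L : ℕ} (π : Equiv.Perm (Fin L)) (i : ℕ) : ℕ :=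
  if h : i < L then π ⟨i, h⟩ else i

theorem permIdx_of_lt {L : ℕ} (π : Equiv.Perm (Fin L)) (i : Fin L) : permIdx π i = π i := by
  simp [permIdx]

def permExtend {L n : ℕ} (h : L ≤ n) (π : Equiv.Perm (Fin L)) : Equiv.Perm (Fin n) :=
  π.extendDomain (Fin.castLEquiv h)

theorem val_permExtend {L n : ℕ} (h : L ≤ n) (π : Equiv.Perm (Fin L)) (i : Fin n) :
    (permExtend h π i : ℕ) = permIdx π i := by
  by_cases hi : (i : ℕ) < L
  · rw [permExtend, Equiv.Perm.extendDomain_apply_subtype π (Fin.castLEquiv h) hi]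
    simp [permIdx, hi]
  · rw [permExtend, Equiv.Perm.extendDomain_apply_not_subtype π (Fin.castLEquiv h) hi]
    simp [permIdx, hi]

theorem extN_permNode_iff_of_permuted {𝒴 : Type*} {y : List 𝒴} (π : Equiv.Perm (Fin y.length))
    {f g : ℕ → 𝒴} (h : ∀ i < y.length, g (i + 1) = f (permIdx π i + 1)) :
    ExtN (permNode y π) g ↔ ExtN y f := by
  rw [extN_permNode_iff, ExtN,
    ← π.forall_congr_right (q := fun j : Fin y.length => f (j + 1) = y.get j)]
  refine forall_congr' fun i => ?_
  rw [h i i.2, permIdx_of_lt]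

theorem eq_or_le_of_forall_le_iff {a b L : ℕ} (h : ∀ m, L ≤ m → (a ≤ m ↔ b ≤ m)) :
    a = b ∨ a ≤ L ∧ b ≤ L := by
  by_cases ha : a ≤ L
  · exact Or.inr ⟨ha, (h L le_rfl).1 ha⟩
  · have hb : ¬ b ≤ L := fun hb => ha ((h L le_rfl).2 hb)
    exact Or.inl (le_antisymm ((h b (by omega)).2 le_rfl) ((h a (by omega)).1 le_rfl))

end Permutations

section StoppingTimes

variable {Ω : Type*} {𝒳 𝒴 : Type*} {p : Ω → ℝ} {X : ℕ → Ω → 𝒳} {S : Ω → ℕ} {κ : ℕ}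

theorem IsStopFun.isSTW {t : (ℕ → 𝒴) → ℕ} (ht : IsStopFun t) (Y : ℕ → Ω → 𝒴) :
    IsSTW Y (fun ω => t (pathOf Y ω)) :=
  fun _ _ h => ht _ _ h

theorem IsSTW.le_iff_of_agree (hS : IsSTW X S) {ω ω' : Ω} {m : ℕ}
    (h : ∀ i, 1 ≤ i → i ≤ m → X i ω = X i ω') : S ω ≤ m ↔ S ω' ≤ m :=
  ⟨fun hle => hS ω ω' (fun i h1 h2 => h i h1 (h2.trans hle)) ▸ hle,
    fun hle => hS ω' ω (fun i h1 h2 => (h i h1 (h2.trans hle)).symm) ▸ hle⟩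

theorem IsSTW.eq_of_agree (hS : IsSTW X S) (hSb : ∀ ω, S ω ≤ κ) {ω ω' : Ω}
    (h : ∀ i, 1 ≤ i → i ≤ κ → X i ω = X i ω') : S ω = S ω' :=
  (hS ω ω' fun i h1 h2 => h i h1 (h2.trans (hSb ω))).symm

theorem IsSTW.cprW_le_eq [Fintype Ω] (hS : IsSTW X S) (hp : ∀ ω, 0 ≤ p ω) {ω : Ω}
    (hω : p ω ≠ 0) {m : ℕ} {B : Ω → Prop} (hB : ∀ ω', B ω' ↔ ∀ i < m, X (i + 1) ω' = X (i + 1) ω) :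
    cprW p (fun ω' => S ω' ≤ m) B = if S ω ≤ m then 1 else 0 := by
  have hconst : ∀ ω', B ω' → (S ω' ≤ m ↔ S ω ≤ m) := fun ω' h =>
    hS.le_iff_of_agree fun i h1 h2 => by
      simpa [Nat.sub_add_cancel h1] using (hB ω').1 h (i - 1) (by omega)
  unfold cprW
  split_ifs with hle
  · rw [prW_congr fun ω' => ⟨And.right, fun h => ⟨(hconst ω' h).2 hle, h⟩⟩,
      div_self (prW_ne_zero_of_mem hp ((hB ω).2 fun _ _ => rfl) hω)]
  · rw [prW_congr (B := fun _ => False)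
      fun ω' => ⟨fun h => hle ((hconst ω' h.2).1 h.1), False.elim⟩]
    simp [prW]

theorem IsSTW.le_iff_of_permuted [Fintype Ω] (hS : IsSTW X S) (hp : ∀ ω, 0 ≤ p ω)
    (hperm : PermInvST p X S κ) {L m : ℕ} (π : Equiv.Perm (Fin L)) (hLm : L ≤ m) (hmκ : m ≤ κ)
    {ω ω' : Ω} (hω : p ω ≠ 0) (hω' : p ω' ≠ 0)
    (hX : ∀ i < m, X (i + 1) ω' = X (permIdx π i + 1) ω) :
    S ω ≤ m ↔ S ω' ≤ m := by
  have hz : (prefixOf (pathOf X ω) m).length = m := length_prefixOf _ _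
  have key := hperm (prefixOf (pathOf X ω) m) (hz.symm ▸ hmκ) (permExtend (hz.symm ▸ hLm) π)
  rw [hS.cprW_le_eq hp hω (fun ω'' => by rw [extN_prefixOf_iff, hz]; rfl),
    hS.cprW_le_eq hp hω' (fun ω'' => ?_), hz] at key
  · split_ifs at key <;> norm_num at key <;> tauto
  · simp only [extN_permNode_iff, Fin.forall_iff, get_prefixOf, val_permExtend, pathOf]
    rw [hz]
    exact forall₂_congr fun i hi => by rw [hX i hi]

theorem IsSTW.eq_or_le_of_permuted [Fintype Ω] (hS : IsSTW X S) (hp : ∀ ω, 0 ≤ p ω)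
    (hSb : ∀ ω, S ω ≤ κ) (hperm : PermInvST p X S κ) {L : ℕ} (π : Equiv.Perm (Fin L))
    {ω ω' : Ω} (hω : p ω ≠ 0) (hω' : p ω' ≠ 0)
    (hX : ∀ i < κ, X (i + 1) ω' = X (permIdx π i + 1) ω) :
    S ω = S ω' ∨ S ω ≤ L ∧ S ω' ≤ L := by
  refine eq_or_le_of_forall_le_iff fun m hLm => ?_
  by_cases hmκ : m ≤ κ
  · exact hS.le_iff_of_permuted hp hperm π hLm hmκ hω hω' fun i hi => hX i (by omega)
  · exact iff_of_true ((hSb ω).trans (by omega)) ((hSb ω').trans (by omega))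

end StoppingTimes

section PairPrefix

variable {Ω : Type*} {𝒳 𝒴 : Type*} {p : Ω → ℝ} {X : ℕ → Ω → 𝒳} {Y : ℕ → Ω → 𝒴} {κ : ℕ}

def pairPrefix (X : ℕ → Ω → 𝒳) (Y : ℕ → Ω → 𝒴) (κ : ℕ) (ω : Ω) : Fin κ → 𝒳 × 𝒴 :=
  fun i => (X (i + 1) ω, Y (i + 1) ω)

theorem agree_of_pairPrefix_eq {ω ω' : Ω} (h : pairPrefix X Y κ ω = pairPrefix X Y κ ω') :
    (∀ i, 1 ≤ i → i ≤ κ → X i ω = X i ω') ∧ ∀ i, 1 ≤ i → i ≤ κ → Y i ω = Y i ω' := by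
  have hi : ∀ i, 1 ≤ i → i ≤ κ → (X i ω, Y i ω) = (X i ω', Y i ω') := fun i h1 h2 => by
    simpa [pairPrefix, Nat.sub_add_cancel h1] using congrFun h ⟨i - 1, by omega⟩
  exact ⟨fun i h1 h2 => (Prod.ext_iff.1 (hi i h1 h2)).1,
    fun i h1 h2 => (Prod.ext_iff.1 (hi i h1 h2)).2⟩

theorem coords_of_pairPrefix_eq_comp {L : ℕ} (hLκ : L ≤ κ) (π : Equiv.Perm (Fin L)) {ω ω' : Ω}
    (h : pairPrefix X Y κ ω' = pairPrefix X Y κ ω ∘ permExtend hLκ π) :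
    (∀ i < κ, X (i + 1) ω' = X (permIdx π i + 1) ω) ∧
      ∀ i < κ, Y (i + 1) ω' = Y (permIdx π i + 1) ω := by
  have hi : ∀ i (hi : i < κ), (X (i + 1) ω', Y (i + 1) ω') =
      (X (permIdx π i + 1) ω, Y (permIdx π i + 1) ω) := fun i hi => by
    simpa [pairPrefix, val_permExtend] using congrFun h ⟨i, hi⟩
  exact ⟨fun i h => (Prod.ext_iff.1 (hi i h)).1, fun i h => (Prod.ext_iff.1 (hi i h)).2⟩

theorem IIDPairs.exists_prW_pairPrefix_eq_prod [Fintype Ω] [Fintype 𝒳] [Fintype 𝒴]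
    (h : IIDPairs p X Y κ) :
    ∃ μ : 𝒳 × 𝒴 → ℝ, ∀ u, prW p (fun ω => pairPrefix X Y κ ω = u) = ∏ i, μ (u i) := by
  obtain ⟨μ, -, hμ1, hμ⟩ := h
  obtain ⟨d, -, -⟩ := Finset.exists_ne_zero_of_sum_ne_zero (hμ1 ▸ one_ne_zero : ∑ z, μ z ≠ 0)
  refine ⟨μ, fun u => ?_⟩
  let v : ℕ → 𝒳 × 𝒴 := fun i => if h : i - 1 < κ then u ⟨i - 1, h⟩ else d
  have hv : ∀ i : Fin κ, v (i + 1) = u i := fun i => by simp [v]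
  convert hμ (fun i => (v i).1) (fun i => (v i).2) using 1
  · refine prW_congr fun ω => ?_
    simp only [funext_iff, pairPrefix, ← hv, Prod.ext_iff, Fin.forall_iff]
    constructor
    · intro h i h1 h2
      simpa [Nat.sub_add_cancel h1] using h (i - 1) (by omega)
    · intro h i hi
      exact h (i + 1) (by omega) (by omega)
  · simp only [Prod.mk.eta, ← hv]
    rw [Fin.prod_univ_eq_prod_range (fun i => μ (v (i + 1))), Finset.range_eq_Ico,
      Finset.prod_Ico_add' (fun i => μ (v i)), Finset.Ico_add_one_right_eq_Icc]

theorem IIDPairs.prW_pairPrefix_comp_perm [Fintype Ω] [Fintype 𝒳] [Fintype 𝒴]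
    (h : IIDPairs p X Y κ) (e : Equiv.Perm (Fin κ)) (u : Fin κ → 𝒳 × 𝒴) :
    prW p (fun ω => pairPrefix X Y κ ω = u ∘ e) = prW p (fun ω => pairPrefix X Y κ ω = u) := by
  obtain ⟨μ, hμ⟩ := h.exists_prW_pairPrefix_eq_prod
  rw [hμ, hμ]
  exact Equiv.prod_comp e fun i => μ (u i)

end PairPrefix

section NodeIntegrals

variable {Ω : Type*} {𝒳 𝒴 : Type*} {p : Ω → ℝ} {X : ℕ → Ω → 𝒳} {Y : ℕ → Ω → 𝒴}
  {S : Ω → ℕ} {t : (ℕ → 𝒴) → ℕ} {κ : ℕ}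

noncomputable def nodeIntegrand (Y : ℕ → Ω → 𝒴) (S : Ω → ℕ) (t : (ℕ → 𝒴) → ℕ)
    (φ : ℕ → ℕ → ℕ → ℝ) (z : List 𝒴) (ω : Ω) : ℝ :=
  if ExtN z (pathOf Y ω) then φ z.length (t (pathOf Y ω)) (S ω) else 0

theorem bSubW_sub_bW [Fintype Ω] (p : Ω → ℝ) (Y : ℕ → Ω → 𝒴) (S : Ω → ℕ) (z : List 𝒴)
    (t : (ℕ → 𝒴) → ℕ) : bSubW p Y S z t - bW p Y S z =
      exW p (nodeIntegrand Y S t (fun L T s => posP ((T : ℝ) - s) - posP ((L : ℝ) - s)) z) := by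
  unfold bSubW bW exW nodeIntegrand
  rw [← Finset.sum_sub_distrib]
  refine Finset.sum_congr rfl fun ω _ => ?_
  by_cases hz : ExtN z (pathOf Y ω) <;> simp only [hz, if_true, if_false] <;> ring

theorem aW_sub_aSubW [Fintype Ω] (p : Ω → ℝ) (Y : ℕ → Ω → 𝒴) (S : Ω → ℕ) (z : List 𝒴)
    (t : (ℕ → 𝒴) → ℕ) : aW p Y S z - aSubW p Y S z t =
      exW p (nodeIntegrand Y S t
        (fun L T s => (if L < s then 1 else 0) - if T < s then 1 else 0) z) := by
  unfold aW aSubW prW exW nodeIntegrand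
  rw [← Finset.sum_sub_distrib]
  refine Finset.sum_congr rfl fun ω _ => ?_
  by_cases hz : ExtN z (pathOf Y ω) <;> by_cases h1 : z.length < S ω <;>
    by_cases h2 : t (pathOf Y ω) < S ω <;> simp [hz, h1, h2]

theorem nodeIntegrand_factorsThrough (hS : IsSTW X S) (hSb : ∀ ω, S ω ≤ κ) (ht : IsStopFun t)
    (htb : ∀ f, t f ≤ κ) (φ : ℕ → ℕ → ℕ → ℝ) {z : List 𝒴} (hz : z.length ≤ κ) :
    (nodeIntegrand Y S t φ z).FactorsThrough (pairPrefix X Y κ) := by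
  intro ω ω' h
  obtain ⟨hX, hY⟩ := agree_of_pairPrefix_eq h
  have hT : t (pathOf Y ω) = t (pathOf Y ω') := (ht.isSTW Y).eq_of_agree (fun _ => htb _) hY
  have hext : ExtN z (pathOf Y ω) ↔ ExtN z (pathOf Y ω') :=
    forall_congr' fun i => by rw [pathOf, pathOf, hY (i + 1) (by omega) (by omega)]
  simp only [nodeIntegrand, hS.eq_of_agree hSb hX, hT, hext]

theorem exW_nodeIntegrand_permNode [Fintype Ω] [Fintype 𝒳] [Fintype 𝒴] (hp : ∀ ω, 0 ≤ p ω)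
    (hiid : IIDPairs p X Y κ) (hS : IsSTW X S) (hSb : ∀ ω, S ω ≤ κ)
    (hpermS : PermInvST p X S κ) (ht : IsStopFun t) (htb : ∀ f, t f ≤ κ)
    (hpermT : PermInvST p Y (fun ω => t (pathOf Y ω)) κ) {y : List 𝒴} (hy : InternalNode t y)
    (π : Equiv.Perm (Fin y.length)) (φ : ℕ → ℕ → ℕ → ℝ)
    (hφ : ∀ T s s', y.length ≤ T → s ≤ y.length → s' ≤ y.length →
      φ y.length T s = φ y.length T s') :
    exW p (nodeIntegrand Y S t φ (permNode y π)) = exW p (nodeIntegrand Y S t φ y) := by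
  have hLκ : y.length ≤ κ := hy.length_le htb
  refine exW_eq_of_exchangeable (pairPrefix X Y κ)
    ((permExtend hLκ π).symm.arrowCongr (Equiv.refl _)) (hiid.prW_pairPrefix_comp_perm _)
    (nodeIntegrand_factorsThrough hS hSb ht htb φ hLκ)
    (nodeIntegrand_factorsThrough hS hSb ht htb φ ((length_permNode y π).trans_le hLκ)) ?_
  intro ω ω' hω hω' hW
  obtain ⟨hX, hY⟩ := coords_of_pairPrefix_eq_comp hLκ π hW
  unfold nodeIntegrand
  have hext : ExtN (permNode y π) (pathOf Y ω') ↔ ExtN y (pathOf Y ω) :=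
    extN_permNode_iff_of_permuted π fun i hi => hY i (hi.trans_le hLκ)
  rw [length_permNode, if_congr hext rfl rfl]
  split_ifs with hyω
  · have hTω : t (pathOf Y ω) = t (pathOf Y ω') :=
      ((ht.isSTW Y).eq_or_le_of_permuted hp (fun _ => htb _) hpermT π hω hω' hY).resolve_right
        fun h => (hy _ hyω).not_ge h.1
    rw [← hTω]
    rcases hS.eq_or_le_of_permuted hp hSb hpermS π hω hω' hX with hs | ⟨hs, hs'⟩
    · rw [hs]
    · exact hφ _ _ _ (hy _ hyω).le hs' hs
  · rfl

theorem posP_sub_sub_posP_sub {L T s : ℕ} (hs : s ≤ L) (hL : L ≤ T) :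
    posP ((T : ℝ) - s) - posP ((L : ℝ) - s) = T - L := by
  have hsL : (s : ℝ) ≤ L := by exact_mod_cast hs
  have hLT : (L : ℝ) ≤ T := by exact_mod_cast hL
  rw [posP, posP, max_eq_left (by linarith), max_eq_left (by linarith)]
  ring

end NodeIntegrals

/-- if `(X_i,Y_i)` are i.i.d., `S` is permutation invariant w.r.t. `X`,
and the non-randomized stopping time of tree `t` is permutation invariant w.r.t. `Y`,
then `g(y,T) = g(π(y),T)` for every internal node `y` and coordinate permutation `π`. -/
theorem g_perm_invariant
    {Ω 𝒳 𝒴 : Type*} [Fintype Ω] [Fintype 𝒳] [Fintype 𝒴]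
    (p : Ω → ℝ) (hp : IsProbW p) (X : ℕ → Ω → 𝒳) (Y : ℕ → Ω → 𝒴) (κ : ℕ)
    (hiid : IIDPairs p X Y κ)
    (S : Ω → ℕ) (hS : IsSTW X S) (hSb : ∀ ω, 1 ≤ S ω ∧ S ω ≤ κ)
    (hpermS : PermInvST p X S κ)
    (t : (ℕ → 𝒴) → ℕ) (ht : IsStopFun t) (htb : ∀ f, 1 ≤ t f ∧ t f ≤ κ)
    (hpermT : PermInvST p Y (fun ω => t (pathOf Y ω)) κ) :
    ∀ (y : List 𝒴) (π : Equiv.Perm (Fin y.length)),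
      InternalNode t y → gW p Y S t y = gW p Y S t (permNode y π) := by
  intro y π hy
  have key := exW_nodeIntegrand_permNode hp.1 hiid hS (fun ω => (hSb ω).2) hpermS ht
    (fun f => (htb f).2) hpermT hy π
  have hb := key (fun L T s => posP ((T : ℝ) - s) - posP ((L : ℝ) - s))
    fun T s s' hT hs hs' => by rw [posP_sub_sub_posP_sub hs hT, posP_sub_sub_posP_sub hs' hT]
  have ha := key (fun L T s => (if L < s then 1 else 0) - if T < s then 1 else 0)
    fun T s s' hT hs hs' => by simp [not_lt.2 hs, not_lt.2 hs', not_lt.2 (hs.trans hT),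
      not_lt.2 (hs'.trans hT)]
  rw [gW, gW, bSubW_sub_bW, bSubW_sub_bW, aW_sub_aSubW, aW_sub_aSubW, hb, ha]
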